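/- Let G be a linearly ordered group which is nontrivial and satisfies the common-power axiom. Then there exists an injective, strictly monotone group homomorphism from G (written multiplicatively) into the additive group ℚ of rational numbers (i.e. a map φ : G → ℚ with φ(x·y) = φ(x) + φ(y), φ injective, and x ≤ y implying φ(x) ≤ φ(y)). -/

import Mathlib

/-!
Fix `a > 1`. By the common-power axiom every `x ≥ 1`, and hence every `x`, satisfies
`x ^ m = a ^ n` for some `m > 0` and `n : ℤ`; since `n ↦ a ^ n` is injective, the ratio `n / m`
depends only on `x`. Elements `≥ 1` are powers of a common element, so they commute, and hence
the group is commutative. This makes `x ↦ n / m` additive; it is positive on elements `> 1`,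
hence strictly monotone.
-/

def HasCommonPowers (G : Type*) [Group G] [LE G] : Prop :=
  ∀ x y : G, 1 ≤ x → 1 ≤ y → ∃ z : G, 1 ≤ z ∧ ∃ n m : ℕ, x = z ^ n ∧ y = z ^ m

section
variable {G : Type*} [Group G] [LinearOrder G] [MulLeftMono G]

theorem zpow_strictMono_of_one_lt {a : G} (ha : 1 < a) : StrictMono (a ^ · : ℤ → G) :=
  strictMono_int_of_lt_succ fun n => by
    simpa [zpow_add_one] using lt_mul_of_one_lt_right' (a ^ n) ha

theorem div_eq_div_of_pow_eq_zpow {a x : G} (ha : 1 < a) {m m' : ℕ} {n n' : ℤ}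
    (hm : 0 < m) (hm' : 0 < m') (h : x ^ m = a ^ n) (h' : x ^ m' = a ^ n') :
    (n : ℚ) / m = n' / m' := by
  have hpow : a ^ (n * m') = a ^ (n' * m) := by
    rw [zpow_mul, zpow_mul, zpow_natCast, zpow_natCast, ← h, ← h', ← pow_mul, ← pow_mul,
      mul_comm]
  have hexp : n * m' = n' * m := (zpow_strictMono_of_one_lt ha).injective hpow
  rw [div_eq_div_iff (by positivity) (by positivity)]
  exact_mod_cast hexp

open Classical in
noncomputable def ratLog (a x : G) : ℚ :=
  if h : ∃ p : ℕ × ℤ, 0 < p.1 ∧ x ^ p.1 = a ^ p.2 then (h.choose.2 : ℚ) / h.choose.1 else 0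

theorem ratLog_eq {a x : G} (ha : 1 < a) {m : ℕ} {n : ℤ} (hm : 0 < m) (h : x ^ m = a ^ n) :
    ratLog a x = n / m := by
  have hex : ∃ p : ℕ × ℤ, 0 < p.1 ∧ x ^ p.1 = a ^ p.2 := ⟨(m, n), hm, h⟩
  rw [ratLog, dif_pos hex]
  exact div_eq_div_of_pow_eq_zpow ha hex.choose_spec.1 hm hex.choose_spec.2 h

theorem commute_of_hasCommonPowers (hcp : HasCommonPowers G) (x y : G) : Commute x y := by
  have hpos : ∀ {x y : G}, 1 ≤ x → 1 ≤ y → Commute x y := fun hx hy => by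
    obtain ⟨z, -, n, m, rfl, rfl⟩ := hcp _ _ hx hy
    exact Commute.pow_pow_self z n m
  rcases le_total 1 x with hx | hx <;> rcases le_total 1 y with hy | hy
  · exact hpos hx hy
  · exact Commute.inv_right_iff.1 (hpos hx (one_le_inv'.2 hy))
  · exact Commute.inv_left_iff.1 (hpos (one_le_inv'.2 hx) hy)
  · exact Commute.inv_inv_iff.1 (hpos (one_le_inv'.2 hx) (one_le_inv'.2 hy))

theorem exists_pow_eq_zpow (hcp : HasCommonPowers G) {a : G} (ha : 1 < a) (x : G) :
    ∃ m : ℕ, 0 < m ∧ ∃ n : ℤ, x ^ m = a ^ n := by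
  have hpos : ∀ x : G, 1 ≤ x → ∃ m : ℕ, 0 < m ∧ ∃ n : ℤ, x ^ m = a ^ n := by
    intro x hx
    obtain ⟨z, -, p, q, rfl, rfl⟩ := hcp x a hx ha.le
    refine ⟨q, Nat.pos_of_ne_zero ?_, p, ?_⟩
    · rintro rfl
      simp at ha
    · rw [zpow_natCast, ← pow_mul, ← pow_mul, mul_comm]
  rcases le_total 1 x with hx | hx
  · exact hpos x hx
  · obtain ⟨m, hm, n, h⟩ := hpos x⁻¹ (one_le_inv'.2 hx)
    exact ⟨m, hm, -n, by rw [zpow_neg, ← h, inv_pow, inv_inv]⟩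

theorem ratLog_mul (hcp : HasCommonPowers G) {a : G} (ha : 1 < a) (x y : G) :
    ratLog a (x * y) = ratLog a x + ratLog a y := by
  obtain ⟨m, hm, n, hx⟩ := exists_pow_eq_zpow hcp ha x
  obtain ⟨m', hm', n', hy⟩ := exists_pow_eq_zpow hcp ha y
  have hxy : (x * y) ^ (m * m') = a ^ (n * m' + n' * m) := by
    rw [(commute_of_hasCommonPowers hcp x y).mul_pow, pow_mul x, pow_mul' y, hx, hy,
      zpow_add, zpow_mul, zpow_mul, zpow_natCast, zpow_natCast]
  rw [ratLog_eq ha (by positivity) hxy, ratLog_eq ha hm hx, ratLog_eq ha hm' hy]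
  push_cast
  field_simp

theorem ratLog_pos (hcp : HasCommonPowers G) {a x : G} (ha : 1 < a) (hx : 1 < x) :
    0 < ratLog a x := by
  obtain ⟨m, hm, n, h⟩ := exists_pow_eq_zpow hcp ha x
  have hn : 0 < n := (zpow_strictMono_of_one_lt ha).lt_iff_lt.1 <| by
    simpa [← h] using one_lt_pow' hx hm.ne'
  rw [ratLog_eq ha hm h]
  positivity

theorem ratLog_strictMono (hcp : HasCommonPowers G) {a : G} (ha : 1 < a) :
    StrictMono (ratLog a) := by
  intro x y hxy
  have hquot : 1 < x⁻¹ * y := by simpa using mul_lt_mul_right hxy x⁻¹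
  calc ratLog a x < ratLog a x + ratLog a (x⁻¹ * y) :=
        lt_add_of_pos_right _ (ratLog_pos hcp ha hquot)
    _ = ratLog a y := by rw [← ratLog_mul hcp ha, mul_inv_cancel_left]

end

/-- A nontrivial linearly ordered group satisfying the common-power axiom
admits an injective, monotone group homomorphism into `(ℚ, +)`. -/
theorem stmt1 {G : Type*} [Group G] [LinearOrder G]
    (mono : ∀ a b c d : G, a ≤ b → c * a * d ≤ c * b * d)
    (hnt : ∃ x : G, x ≠ 1)
    (hcp : ∀ x y : G, 1 ≤ x → 1 ≤ y →
      ∃ z : G, 1 ≤ z ∧ ∃ n m : ℕ, x = z ^ n ∧ y = z ^ m) :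
    ∃ φ : G → ℚ, (∀ x y : G, φ (x * y) = φ x + φ y) ∧
      Function.Injective φ ∧ (∀ x y : G, x ≤ y → φ x ≤ φ y) := by
  have : MulLeftMono G := ⟨fun c x y h => by simpa using mono x y c 1 h⟩
  obtain ⟨x, hx⟩ := hnt
  obtain ⟨a, ha⟩ : ∃ a : G, 1 < a :=
    (lt_or_gt_of_ne hx).elim (fun h => ⟨x⁻¹, one_lt_inv'.2 h⟩) fun h => ⟨x, h⟩
  exact ⟨ratLog a, ratLog_mul hcp ha, (ratLog_strictMono hcp ha).injective,
    fun _ _ h => (ratLog_strictMono hcp ha).monotone h⟩
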